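/- (Range enclosing property for rational functions.) Let p and q be polynomials in n variables of degree ≤ k with Bernstein coefficients b_α(p,k,Δ) and b_α(q,k,Δ) of degree k on the standard simplex Δ, and assume b_α(q,k,Δ) > 0 for all |α| = k. Then q(x) > 0 for all x ∈ Δ, and for every x ∈ Δ: min_{|α|=k} b_α(p,k,Δ)/b_α(q,k,Δ) ≤ p(x)/q(x) ≤ max_{|α|=k} b_α(p,k,Δ)/b_α(q,k,Δ). -/

import Mathlib

open Finset

noncomputable section

/-- The standard simplex Δ in ℝⁿ. -/
def stdSimp (n : ℕ) : Set (Fin n → ℝ) :=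
  {x | (∀ i, 0 ≤ x i) ∧ ∑ i, x i ≤ 1}

/-- Multi-indices α ∈ ℕ^{n+1} with |α| = k. -/
def multIdx (n k : ℕ) : Finset (Fin (n+1) → ℕ) :=
  Finset.Nat.antidiagonalTuple (n+1) k

lemma multIdx_nonempty (n k : ℕ) : (multIdx n k).Nonempty :=
  ⟨fun i => if i = 0 then k else 0, by
    simp [multIdx, Finset.Nat.mem_antidiagonalTuple]⟩

/-- Bernstein basis polynomial of degree k on the standard simplex. -/
def bern (n k : ℕ) (α : Fin (n+1) → ℕ) (x : Fin n → ℝ) : ℝ :=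
  ((k.factorial : ℝ) / ∏ i, ((α i).factorial : ℝ)) *
    (∏ i : Fin n, x i ^ α i.succ) * (1 - ∑ i, x i) ^ α 0

/-- i-th standard unit multi-index. -/
def unitIdx (n : ℕ) (i : Fin (n+1)) : Fin (n+1) → ℕ :=
  fun j => if j = i then 1 else 0

/-- vertex multi-index k·eᵢ -/
def vertIdx (n k : ℕ) (i : Fin (n+1)) : Fin (n+1) → ℕ :=
  fun j => if j = i then k else 0

/-- second difference -/
def secondDiff (n : ℕ) (b : (Fin (n+1) → ℕ) → ℝ) (γ : Fin (n+1) → ℕ)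
    (i j : Fin (n+1)) : ℝ :=
  b (γ + unitIdx n i + unitIdx n (j - 1)) + b (γ + unitIdx n (i - 1) + unitIdx n j)
    - b (γ + unitIdx n (i - 1) + unitIdx n (j - 1)) - b (γ + unitIdx n i + unitIdx n j)

/-! In the barycentric coordinates `y = (1 - ∑ xᵢ, x)`, which are nonnegative on the simplex and
sum to `1`, each Bernstein polynomial is a multinomial monomial in `y`. So all of them are
nonnegative on the simplex and, at the vertex index of a positive coordinate `y_j`, one is positive;
hence `q x = ∑ c α B_α(x) > 0`. Then `p x / q x` is the average of the ratios `b α / c α` with the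
weights `c α B_α(x) / q x`, so it lies between their minimum and maximum. -/

section WeightedRatio

variable {ι 𝕜 : Type*} [Field 𝕜] [LinearOrder 𝕜] [IsStrictOrderedRing 𝕜]
  {s : Finset ι} {b c w : ι → 𝕜}

theorem Finset.inf'_div_mul_sum_le_sum (hs : s.Nonempty) (hc : ∀ i ∈ s, 0 < c i)
    (hw : ∀ i ∈ s, 0 ≤ w i) :
    s.inf' hs (fun i => b i / c i) * ∑ i ∈ s, c i * w i ≤ ∑ i ∈ s, b i * w i := by
  rw [Finset.mul_sum]
  refine Finset.sum_le_sum fun i hi => ?_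
  have hmin : s.inf' hs (fun i => b i / c i) * c i ≤ b i :=
    (le_div_iff₀ (hc i hi)).mp (Finset.inf'_le _ hi)
  calc s.inf' hs (fun i => b i / c i) * (c i * w i)
      = s.inf' hs (fun i => b i / c i) * c i * w i := by ring
    _ ≤ b i * w i := mul_le_mul_of_nonneg_right hmin (hw i hi)

theorem Finset.sum_le_sup'_div_mul_sum (hs : s.Nonempty) (hc : ∀ i ∈ s, 0 < c i)
    (hw : ∀ i ∈ s, 0 ≤ w i) :
    ∑ i ∈ s, b i * w i ≤ s.sup' hs (fun i => b i / c i) * ∑ i ∈ s, c i * w i := by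
  rw [Finset.mul_sum]
  refine Finset.sum_le_sum fun i hi => ?_
  have hmax : b i ≤ s.sup' hs (fun i => b i / c i) * c i :=
    (div_le_iff₀ (hc i hi)).mp (Finset.le_sup' (fun i => b i / c i) hi)
  calc b i * w i ≤ s.sup' hs (fun i => b i / c i) * c i * w i :=
        mul_le_mul_of_nonneg_right hmax (hw i hi)
    _ = s.sup' hs (fun i => b i / c i) * (c i * w i) := by ring

end WeightedRatio

def baryCoord {n : ℕ} (x : Fin n → ℝ) : Fin (n+1) → ℝ :=
  Fin.cons (1 - ∑ i, x i) x

lemma sum_baryCoord {n : ℕ} (x : Fin n → ℝ) : ∑ j, baryCoord x j = 1 := by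
  simp [baryCoord, Fin.sum_univ_succ]

lemma baryCoord_nonneg {n : ℕ} {x : Fin n → ℝ} (hx : x ∈ stdSimp n) (j : Fin (n+1)) :
    0 ≤ baryCoord x j := by
  cases j using Fin.cases with
  | zero => simpa [baryCoord] using hx.2
  | succ i => simpa [baryCoord] using hx.1 i

lemma bern_eq_prod_baryCoord (n k : ℕ) (α : Fin (n+1) → ℕ) (x : Fin n → ℝ) :
    bern n k α x = (k.factorial / ∏ i, ((α i).factorial : ℝ)) * ∏ j, baryCoord x j ^ α j := by
  rw [bern, Fin.prod_univ_succ (fun j => baryCoord x j ^ α j)]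
  simp only [baryCoord, Fin.cons_zero, Fin.cons_succ]
  ring

lemma bern_nonneg {n : ℕ} (k : ℕ) (α : Fin (n+1) → ℕ) {x : Fin n → ℝ} (hx : x ∈ stdSimp n) :
    0 ≤ bern n k α x := by
  rw [bern_eq_prod_baryCoord]
  exact mul_nonneg (by positivity)
    (Finset.prod_nonneg fun j _ => pow_nonneg (baryCoord_nonneg hx j) _)

lemma vertIdx_mem_multIdx (n k : ℕ) (j : Fin (n+1)) : vertIdx n k j ∈ multIdx n k := by
  simp [multIdx, Finset.Nat.mem_antidiagonalTuple, vertIdx]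

lemma bern_vertIdx (n k : ℕ) (j : Fin (n+1)) (x : Fin n → ℝ) :
    bern n k (vertIdx n k j) x = baryCoord x j ^ k := by
  rw [bern_eq_prod_baryCoord, Finset.prod_eq_single j, Finset.prod_eq_single j] <;>
    simp +contextual [vertIdx, Nat.factorial_ne_zero]

lemma exists_bern_pos {n : ℕ} (k : ℕ) (x : Fin n → ℝ) :
    ∃ α ∈ multIdx n k, 0 < bern n k α x := by
  obtain ⟨j, -, hj⟩ : ∃ j ∈ Finset.univ, (0 : ℝ) < baryCoord x j :=
    Finset.exists_lt_of_sum_lt (by simp [sum_baryCoord])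
  exact ⟨vertIdx n k j, vertIdx_mem_multIdx n k j, by rw [bern_vertIdx]; positivity⟩

theorem stmt6_general (n k : ℕ)
    (p q : (Fin n → ℝ) → ℝ) (b c : (Fin (n+1) → ℕ) → ℝ)
    (hrepp : ∀ x, p x = ∑ α ∈ multIdx n k, b α * bern n k α x)
    (hrepq : ∀ x, q x = ∑ α ∈ multIdx n k, c α * bern n k α x)
    (hc : ∀ α ∈ multIdx n k, 0 < c α) :
    (∀ x ∈ stdSimp n, 0 < q x) ∧
    ∀ x ∈ stdSimp n,
      (multIdx n k).inf' (multIdx_nonempty n k) (fun α => b α / c α) ≤ p x / q x ∧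
      p x / q x ≤ (multIdx n k).sup' (multIdx_nonempty n k) (fun α => b α / c α) := by
  have hq_pos : ∀ x ∈ stdSimp n, 0 < q x := by
    intro x hx
    obtain ⟨α, hα, hbern⟩ := exists_bern_pos k x
    rw [hrepq]
    exact Finset.sum_pos' (fun β hβ => mul_nonneg (hc β hβ).le (bern_nonneg k β hx))
      ⟨α, hα, mul_pos (hc α hα) hbern⟩
  refine ⟨hq_pos, fun x hx => ⟨?_, ?_⟩⟩
  · rw [le_div_iff₀ (hq_pos x hx), hrepp, hrepq]
    exact Finset.inf'_div_mul_sum_le_sum _ hc fun α _ => bern_nonneg k α hx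
  · rw [div_le_iff₀ (hq_pos x hx), hrepp, hrepq]
    exact Finset.sum_le_sup'_div_mul_sum _ hc fun α _ => bern_nonneg k α hx

/-- range enclosing property for rational functions. -/
theorem stmt6 (n k : ℕ) (hn : 1 ≤ n)
    (p q : (Fin n → ℝ) → ℝ) (b c : (Fin (n+1) → ℕ) → ℝ)
    (hrepp : ∀ x, p x = ∑ α ∈ multIdx n k, b α * bern n k α x)
    (hrepq : ∀ x, q x = ∑ α ∈ multIdx n k, c α * bern n k α x)
    (hc : ∀ α ∈ multIdx n k, 0 < c α) :
    (∀ x ∈ stdSimp n, 0 < q x) ∧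
    ∀ x ∈ stdSimp n,
      (multIdx n k).inf' (multIdx_nonempty n k) (fun α => b α / c α) ≤ p x / q x ∧
      p x / q x ≤ (multIdx n k).sup' (multIdx_nonempty n k) (fun α => b α / c α) :=
  stmt6_general n k p q b c hrepp hrepq hc
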